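/- Let L : ℝ^N → ℝ be convex lower semicontinuous with Legendre transform H(p) = sup_q (p·q − L(q)), and assume L has superlinear growth. Fix a ∈ ℝ and p ∈ ℝ^N, and for m ≥ 0, w ∈ ℝ^N set Φ(m,w) := m·L(−w/m) + a·m + p·w if m > 0, Φ(0,0) := 0, and Φ(0,w) := +∞ for w ≠ 0. Then inf_{m ≥ 0, w ∈ ℝ^N} Φ(m,w) = 0 if a ≥ H(p), and = −∞ if a < H(p). -/
import Mathlib


open RealInnerProductSpace

theorem stmt11 (N : ℕ) (L : EuclideanSpace ℝ (Fin N) → ℝ)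
    (hconv : ConvexOn ℝ Set.univ L) (hlsc : LowerSemicontinuous L)
    (hsuper : ∀ c : ℝ, ∃ R : ℝ, ∀ q : EuclideanSpace ℝ (Fin N), R ≤ ‖q‖ → c * ‖q‖ ≤ L q)
    (a : ℝ) (p : EuclideanSpace ℝ (Fin N))
    (Φ : ℝ → EuclideanSpace ℝ (Fin N) → EReal)
    (hΦpos : ∀ m : ℝ, 0 < m → ∀ w,
      Φ m w = ((m * L (-(m⁻¹ • w)) + a * m + ⟪p, w⟫ : ℝ) : EReal))
    (hΦ00 : Φ 0 0 = 0)
    (hΦ0w : ∀ w : EuclideanSpace ℝ (Fin N), w ≠ 0 → Φ 0 w = ⊤) :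
    ((⨆ q, (⟪p, q⟫ - L q)) ≤ a →
      (⨅ (m : ℝ) (_ : 0 ≤ m) (w : EuclideanSpace ℝ (Fin N)), Φ m w) = 0) ∧
    (a < (⨆ q, (⟪p, q⟫ - L q)) →
      (⨅ (m : ℝ) (_ : 0 ≤ m) (w : EuclideanSpace ℝ (Fin N)), Φ m w) = ⊥) := by
  have hLcont : Continuous L := by
    have := hconv.locallyLipschitz
    exact this.continuous
  -- boundedness above of q ↦ ⟪p,q⟫ - L q
  obtain ⟨R, hR⟩ := hsuper (‖p‖ + 1)
  set R' : ℝ := max R 0 with hR'def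
  obtain ⟨q0, _, hq0⟩ := (isCompact_closedBall (0 : EuclideanSpace ℝ (Fin N)) R').exists_isMinOn
    ⟨0, Metric.mem_closedBall_self (le_max_right _ _)⟩ hLcont.continuousOn
  have hbdd : BddAbove (Set.range (fun q : EuclideanSpace ℝ (Fin N) => ⟪p, q⟫ - L q)) := by
    refine ⟨max 0 (‖p‖ * R' - L q0), ?_⟩
    rintro x ⟨q, rfl⟩
    dsimp only
    rcases le_or_gt ‖q‖ R' with h | h
    · have h1 : ⟪p, q⟫ ≤ ‖p‖ * ‖q‖ := real_inner_le_norm p q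
      have h2 : L q0 ≤ L q := hq0 (by simpa [Metric.mem_closedBall, dist_eq_norm] using h)
      have h3 : ‖p‖ * ‖q‖ ≤ ‖p‖ * R' := by
        apply mul_le_mul_of_nonneg_left h (norm_nonneg _)
      refine le_max_of_le_right ?_
      linarith
    · have h1 : ⟪p, q⟫ ≤ ‖p‖ * ‖q‖ := real_inner_le_norm p q
      have h2 : (‖p‖ + 1) * ‖q‖ ≤ L q := hR q (le_trans (le_max_left _ _) h.le)
      refine le_max_of_le_left ?_
      nlinarith [norm_nonneg q]
  have hkey : ∀ q, ⟪p, q⟫ - L q ≤ ⨆ q, (⟪p, q⟫ - L q) := fun q => le_ciSup hbdd q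
  constructor
  · intro ha
    apply le_antisymm
    · calc (⨅ (m : ℝ) (_ : 0 ≤ m) (w : EuclideanSpace ℝ (Fin N)), Φ m w) ≤ Φ 0 0 := by
            refine iInf_le_of_le 0 (iInf_le_of_le le_rfl (iInf_le _ 0))
        _ = 0 := hΦ00
    · refine le_iInf fun m => le_iInf fun hm => le_iInf fun w => ?_
      rcases hm.eq_or_lt with h | h
      · rcases eq_or_ne w 0 with rfl | hw
        · rw [← h, hΦ00]
        · rw [← h, hΦ0w w hw]; exact le_top
      · rw [hΦpos m h w]
        have hm0 : (m : ℝ) ≠ 0 := ne_of_gt h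
        set q' : EuclideanSpace ℝ (Fin N) := -(m⁻¹ • w) with hq'
        have hw' : w = -(m • q') := by
          rw [hq', smul_neg, smul_smul, mul_inv_cancel₀ hm0, one_smul, neg_neg]
        have hinner : ⟪p, w⟫ = -(m * ⟪p, q'⟫) := by
          rw [hw', inner_neg_right, real_inner_smul_right]
        have h1 : ⟪p, q'⟫ - L q' ≤ a := le_trans (hkey q') ha
        have h2 : (0 : ℝ) ≤ m * L q' + a * m + ⟪p, w⟫ := by
          rw [hinner]
          nlinarith
        exact_mod_cast h2
  · intro ha
    obtain ⟨q, hq⟩ := exists_lt_of_lt_ciSup ha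
    set c : ℝ := L q + a - ⟪p, q⟫ with hc
    have hcneg : c < 0 := by rw [hc]; linarith
    rw [EReal.eq_bot_iff_forall_lt]
    intro r
    set t : ℝ := max 0 (r / c) + 1 with ht
    have htpos : 0 < t := by positivity
    have htc : t * c < r := by
      have h1 : r / c < t := lt_of_le_of_lt (le_max_right 0 (r / c)) (lt_add_one _)
      have h2 : t * c < (r / c) * c := by
        exact mul_lt_mul_of_neg_right h1 hcneg
      rwa [div_mul_cancel₀ r (ne_of_lt hcneg)] at h2
    have hcomp : -(t⁻¹ • (-(t • q))) = q := by
      rw [smul_neg, neg_neg, smul_smul, inv_mul_cancel₀ (ne_of_gt htpos), one_smul]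
    calc (⨅ (m : ℝ) (_ : 0 ≤ m) (w : EuclideanSpace ℝ (Fin N)), Φ m w)
        ≤ Φ t (-(t • q)) :=
          iInf_le_of_le t (iInf_le_of_le htpos.le (iInf_le _ _))
      _ = ((t * c : ℝ) : EReal) := by
          rw [hΦpos t htpos _, hcomp]
          congr 1
          rw [inner_neg_right, real_inner_smul_right, hc]
          ring
      _ < ((r : ℝ) : EReal) := by exact_mod_cast htc
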